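/- Let A = P₁ + P₂ be a positive definite complex n×n matrix with P₁, P₂ positive semidefinite, Σ Hermitian positive definite, and suppose null(P₁) ∪ null(P₂ + P₂*) = ℂⁿ. Then ρ((Σ + P₁)^{-1}(Σ - P₂)(Σ + P₂)^{-1}(Σ - P₁)) < 1. -/

import Mathlib

open Matrix ComplexOrder

noncomputable def specNorm {n : ℕ} (M : Matrix (Fin n) (Fin n) ℂ) : ℝ :=
  ‖Matrix.toEuclideanCLM (𝕜 := ℂ) M‖

noncomputable def evnorm {n : ℕ} (x : Fin n → ℂ) : ℝ :=
  ‖(WithLp.equiv 2 (Fin n → ℂ)).symm x‖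

/-- `P` is positive semidefinite in the (possibly non-Hermitian) sense:
`Re (x* P x) ≥ 0` for all `x`. -/
def IsPSD {n : ℕ} (P : Matrix (Fin n) (Fin n) ℂ) : Prop :=
  ∀ x : Fin n → ℂ, 0 ≤ (star x ⬝ᵥ P *ᵥ x).re

/-- `P` is positive definite in the (possibly non-Hermitian) sense:
`Re (x* P x) > 0` for all nonzero `x`. -/
def IsPD {n : ℕ} (P : Matrix (Fin n) (Fin n) ℂ) : Prop :=
  ∀ x : Fin n → ℂ, x ≠ 0 → 0 < (star x ⬝ᵥ P *ᵥ x).re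

/-- `Σ^{-1/2} P Σ^{-1/2}` where `Σ^{1/2}` is the HPD square root of the HPD matrix `Sg`. -/
noncomputable def tild {n : ℕ} (Sg P : Matrix (Fin n) (Fin n) ℂ) (hS : Sg.PosDef) :
    Matrix (Fin n) (Fin n) ℂ :=
  ((hS.posSemidef.1.eigenvectorUnitary : Matrix (Fin n) (Fin n) ℂ) *
      diagonal ((↑) ∘ (√·) ∘ hS.posSemidef.1.eigenvalues) *
      (star hS.posSemidef.1.eigenvectorUnitary : Matrix (Fin n) (Fin n) ℂ))⁻¹ * P *
    ((hS.posSemidef.1.eigenvectorUnitary : Matrix (Fin n) (Fin n) ℂ) *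
      diagonal ((↑) ∘ (√·) ∘ hS.posSemidef.1.eigenvalues) *
      (star hS.posSemidef.1.eigenvectorUnitary : Matrix (Fin n) (Fin n) ℂ))⁻¹

section Aux

variable {n : ℕ}

private lemma isUnit_det_of_ker {M : Matrix (Fin n) (Fin n) ℂ}
    (h : ∀ x, M *ᵥ x = 0 → x = 0) : IsUnit M.det := by
  rw [← Matrix.isUnit_iff_isUnit_det, ← Matrix.mulVec_injective_iff_isUnit]
  intro x y hxy
  have := h (x - y) (by rw [Matrix.mulVec_sub, hxy, sub_self])
  exact sub_eq_zero.mp this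

private lemma isPD_isUnit_det {M : Matrix (Fin n) (Fin n) ℂ} (hM : IsPD M) :
    IsUnit M.det := by
  refine isUnit_det_of_ker fun x hx => ?_
  by_contra hx0
  have h := hM x hx0
  rw [hx] at h
  simp at h

private lemma spec_conj (M X : Matrix (Fin n) (Fin n) ℂ) (h : IsUnit M.det) :
    spectrum ℂ (M⁻¹ * X * M) = spectrum ℂ X := by
  have h2 := spectrum.units_conjugate' (R := ℂ) (a := X) (u := M.nonsingInvUnit h)
  rwa [Matrix.coe_units_inv] at h2

private lemma inner_CLM (M : Matrix (Fin n) (Fin n) ℂ) (x : EuclideanSpace ℂ (Fin n)) :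
    (inner ℂ x (Matrix.toEuclideanCLM (n := Fin n) (𝕜 := ℂ) M x) : ℂ) =
      star (WithLp.equiv 2 (Fin n → ℂ) x) ⬝ᵥ M *ᵥ (WithLp.equiv 2 (Fin n → ℂ) x) := by
  rw [EuclideanSpace.inner_eq_star_dotProduct]
  simp [Matrix.ofLp_toEuclideanCLM, Matrix.toLin'_apply, dotProduct_comm]

private lemma isPD_one_add {Q : Matrix (Fin n) (Fin n) ℂ} (hQ : IsPSD Q) : IsPD (1 + Q) := by
  intro x hx
  rw [Matrix.add_mulVec, dotProduct_add, Complex.add_re]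
  have h1 : 0 < (star x ⬝ᵥ (1 : Matrix (Fin n) (Fin n) ℂ) *ᵥ x).re := by
    have := (Matrix.PosDef.one (n := Fin n) (R := ℂ)).re_dotProduct_pos hx
    simpa using this
  have h2 := hQ x
  linarith

private lemma cayley_apply {Q : Matrix (Fin n) (Fin n) ℂ} (hdet : IsUnit (1 + Q).det)
    (y : EuclideanSpace ℂ (Fin n)) :
    ∃ x : EuclideanSpace ℂ (Fin n),
      Matrix.toEuclideanCLM (n := Fin n) (𝕜 := ℂ) ((1 - Q) * (1 + Q)⁻¹) y
        = x - Matrix.toEuclideanCLM (n := Fin n) (𝕜 := ℂ) Q x ∧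
      y = x + Matrix.toEuclideanCLM (n := Fin n) (𝕜 := ℂ) Q x := by
  refine ⟨Matrix.toEuclideanCLM (n := Fin n) (𝕜 := ℂ) (1 + Q)⁻¹ y, ?_, ?_⟩
  · rw [_root_.map_mul, ContinuousLinearMap.mul_apply, _root_.map_sub, _root_.map_one]
    simp [ContinuousLinearMap.sub_apply]
  · conv_lhs => rw [show y = Matrix.toEuclideanCLM (n := Fin n) (𝕜 := ℂ) ((1 + Q) * (1 + Q)⁻¹) y by
      rw [Matrix.mul_nonsing_inv _ hdet, _root_.map_one, ContinuousLinearMap.one_apply]]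
    rw [_root_.map_mul, ContinuousLinearMap.mul_apply, _root_.map_add, _root_.map_one]
    simp [ContinuousLinearMap.add_apply]

private lemma norm_sub_le_norm_add' {x z : EuclideanSpace ℂ (Fin n)}
    (h : 0 ≤ (inner ℂ x z : ℂ).re) : ‖x - z‖ ≤ ‖x + z‖ := by
  refine le_of_pow_le_pow_left₀ two_ne_zero (norm_nonneg _) ?_
  rw [norm_sub_sq (𝕜 := ℂ), norm_add_sq (𝕜 := ℂ)]
  have : RCLike.re (inner ℂ x z : ℂ) = (inner ℂ x z : ℂ).re := rfl
  rw [this]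
  linarith

private lemma norm_sub_lt_norm_add {x z : EuclideanSpace ℂ (Fin n)}
    (h : 0 < (inner ℂ x z : ℂ).re) : ‖x - z‖ < ‖x + z‖ := by
  refine lt_of_pow_lt_pow_left₀ 2 (norm_nonneg _) ?_
  rw [norm_sub_sq (𝕜 := ℂ), norm_add_sq (𝕜 := ℂ)]
  have : RCLike.re (inner ℂ x z : ℂ) = (inner ℂ x z : ℂ).re := rfl
  rw [this]
  linarith

private lemma cayley_norm_le {Q : Matrix (Fin n) (Fin n) ℂ} (hQ : IsPSD Q) :
    ‖Matrix.toEuclideanCLM (n := Fin n) (𝕜 := ℂ) ((1 - Q) * (1 + Q)⁻¹)‖ ≤ 1 := by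
  have hdet := isPD_isUnit_det (isPD_one_add hQ)
  refine ContinuousLinearMap.opNorm_le_bound
    (Matrix.toEuclideanCLM (n := Fin n) (𝕜 := ℂ) ((1 - Q) * (1 + Q)⁻¹)) zero_le_one fun y => ?_
  obtain ⟨x, h1, h2⟩ := cayley_apply hdet y
  rw [h1, one_mul]
  conv_rhs => rw [h2]
  refine norm_sub_le_norm_add' ?_
  rw [inner_CLM]
  exact hQ _

private lemma opNorm_lt_one_of_forall
    {f : EuclideanSpace ℂ (Fin n) →L[ℂ] EuclideanSpace ℂ (Fin n)}
    (h : ∀ y, y ≠ 0 → ‖f y‖ < ‖y‖) : ‖f‖ < 1 := by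
  rcases subsingleton_or_nontrivial (EuclideanSpace ℂ (Fin n)) with hE | hE
  · have hf : ‖f‖ ≤ 0 := f.opNorm_le_bound le_rfl fun x => by
      rw [Subsingleton.elim x 0, map_zero]; simp
    linarith
  · obtain ⟨z, hz, hmax⟩ := (isCompact_sphere (0 : EuclideanSpace ℂ (Fin n)) 1).exists_isMaxOn
      (NormedSpace.sphere_nonempty.mpr zero_le_one) (f.continuous.norm.continuousOn)
    have hz1 : ‖z‖ = 1 := mem_sphere_zero_iff_norm.mp hz
    have hfz : ‖f z‖ < 1 := by
      rw [← hz1]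
      exact h z (by rw [← norm_ne_zero_iff, hz1]; norm_num)
    refine lt_of_le_of_lt (f.opNorm_le_bound (norm_nonneg (f z)) fun x => ?_) hfz
    rcases eq_or_ne x 0 with rfl | hx
    · simp
    · have hxn : (0:ℝ) < ‖x‖ := norm_pos_iff.mpr hx
      have hmem : ((‖x‖ : ℂ)⁻¹ • x) ∈ Metric.sphere (0 : EuclideanSpace ℂ (Fin n)) 1 := by
        rw [mem_sphere_zero_iff_norm, norm_smul, norm_inv, Complex.norm_real,
          Real.norm_eq_abs, abs_of_nonneg (norm_nonneg x), inv_mul_cancel₀ hxn.ne']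
      have hle : ‖f ((‖x‖ : ℂ)⁻¹ • x)‖ ≤ ‖f z‖ := hmax hmem
      rw [_root_.map_smul, norm_smul, norm_inv, Complex.norm_real,
        Real.norm_eq_abs, abs_of_nonneg (norm_nonneg x)] at hle
      calc ‖f x‖ = ‖x‖ * (‖x‖⁻¹ * ‖f x‖) := by field_simp
      _ ≤ ‖x‖ * ‖f z‖ := by nlinarith [norm_nonneg (f x)]
      _ = ‖f z‖ * ‖x‖ := mul_comm _ _

private lemma cayley_norm_lt {Q : Matrix (Fin n) (Fin n) ℂ} (hQ : IsPD Q) :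
    ‖Matrix.toEuclideanCLM (n := Fin n) (𝕜 := ℂ) ((1 - Q) * (1 + Q)⁻¹)‖ < 1 := by
  have hQpsd : IsPSD Q := fun x => by
    rcases eq_or_ne x 0 with rfl | hx
    · simp
    · exact (hQ x hx).le
  have hdet := isPD_isUnit_det (isPD_one_add hQpsd)
  refine opNorm_lt_one_of_forall (f := Matrix.toEuclideanCLM (n := Fin n) (𝕜 := ℂ) ((1 - Q) * (1 + Q)⁻¹)) fun y hy => ?_
  obtain ⟨x, h1, h2⟩ := cayley_apply hdet y
  have hx : x ≠ 0 := by
    rintro rfl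
    rw [map_zero, add_zero] at h2
    exact hy h2
  rw [h1]
  conv_rhs => rw [h2]
  refine norm_sub_lt_norm_add ?_
  rw [inner_CLM]
  refine hQ _ fun h0 => hx ?_
  have := congrArg (WithLp.equiv 2 (Fin n → ℂ)).symm h0
  simpa using this

private lemma dot_conjTranspose (M : Matrix (Fin n) (Fin n) ℂ) (y : Fin n → ℂ) :
    star y ⬝ᵥ Mᴴ *ᵥ y = star (star y ⬝ᵥ M *ᵥ y) := by
  have e : star (star y ⬝ᵥ M *ᵥ y) = star (M *ᵥ y) ⬝ᵥ y := by
    rw [Matrix.star_dotProduct, star_star]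
  rw [Matrix.star_mulVec, ← Matrix.dotProduct_mulVec] at e
  exact e.symm

private lemma conj_dot {S P : Matrix (Fin n) (Fin n) ℂ} (hSH : S⁻¹ᴴ = S⁻¹) (x : Fin n → ℂ) :
    star x ⬝ᵥ (S⁻¹ * P * S⁻¹) *ᵥ x = star (S⁻¹ *ᵥ x) ⬝ᵥ P *ᵥ (S⁻¹ *ᵥ x) := by
  conv_rhs => rw [Matrix.star_mulVec, hSH]
  rw [mul_assoc, ← Matrix.mulVec_mulVec, Matrix.dotProduct_mulVec, ← Matrix.mulVec_mulVec]

open scoped MatrixOrder in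
private lemma exists_sqrt {Sg : Matrix (Fin n) (Fin n) ℂ} (hS : Sg.PosDef) :
    ∃ S : Matrix (Fin n) (Fin n) ℂ, S * S = Sg ∧ Sᴴ = S :=
  ⟨CFC.sqrt Sg, CFC.sqrt_mul_sqrt_self Sg hS.posSemidef.nonneg, (CFC.sqrt_nonneg Sg).posSemidef.1⟩

end Aux

theorem stmt17 {n : ℕ} (P1 P2 A Sg : Matrix (Fin n) (Fin n) ℂ)
    (hA : A = P1 + P2) (h1 : IsPSD P1) (h2 : IsPSD P2) (hApd : IsPD A)
    (hS : Sg.PosDef)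
    (hnull : ∀ x : Fin n → ℂ, P1 *ᵥ x = 0 ∨ (P2 + P2ᴴ) *ᵥ x = 0) :
    spectralRadius ℂ ((Sg + P1)⁻¹ * (Sg - P2) * (Sg + P2)⁻¹ * (Sg - P1)) < 1 := by
  rcases Nat.eq_zero_or_pos n with hn | hn
  · subst hn
    have hsp : spectrum ℂ ((Sg + P1)⁻¹ * (Sg - P2) * (Sg + P2)⁻¹ * (Sg - P1)) = ∅ := by
      ext z
      simp only [spectrum.mem_iff, Set.mem_empty_iff_false, iff_false, not_not]
      exact isUnit_of_subsingleton _
    rw [spectralRadius, hsp]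
    simp
  haveI : Nonempty (Fin n) := ⟨⟨0, hn⟩⟩
  obtain ⟨S, hSS, hSherm⟩ := exists_sqrt hS
  have hSgPD : ∀ x, x ≠ 0 → 0 < (star x ⬝ᵥ Sg *ᵥ x).re := fun x hx => by
    simpa using hS.re_dotProduct_pos hx
  have hSdet : IsUnit S.det := by
    refine isUnit_det_of_ker fun x hx => ?_
    by_contra hx0
    have h0 : Sg *ᵥ x = 0 := by
      rw [← hSS, ← Matrix.mulVec_mulVec, hx, Matrix.mulVec_zero]
    have := hSgPD x hx0
    rw [h0] at this
    simp at this
  have hS1 : S * S⁻¹ = 1 := Matrix.mul_nonsing_inv _ hSdet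
  have hS1' : S⁻¹ * S = 1 := Matrix.nonsing_inv_mul _ hSdet
  have hSinvH : S⁻¹ᴴ = S⁻¹ := by rw [Matrix.conjTranspose_nonsing_inv, hSherm]
  set Q1 := S⁻¹ * P1 * S⁻¹ with hQ1def
  set Q2 := S⁻¹ * P2 * S⁻¹ with hQ2def
  have hSinj : ∀ x : Fin n → ℂ, x ≠ 0 → S⁻¹ *ᵥ x ≠ 0 := by
    intro x hx h0
    apply hx
    have hsx : S *ᵥ (S⁻¹ *ᵥ x) = x := by
      rw [Matrix.mulVec_mulVec, hS1, Matrix.one_mulVec]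
    rw [h0, Matrix.mulVec_zero] at hsx
    exact hsx.symm
  have hQ1psd : IsPSD Q1 := fun x => by rw [hQ1def, conj_dot hSinvH]; exact h1 _
  have hQ2psd : IsPSD Q2 := fun x => by rw [hQ2def, conj_dot hSinvH]; exact h2 _
  have hApd' : ∀ x, x ≠ 0 →
      0 < (star x ⬝ᵥ P1 *ᵥ x).re + (star x ⬝ᵥ P2 *ᵥ x).re := by
    intro x hx
    have := hApd x hx
    rwa [hA, Matrix.add_mulVec, dotProduct_add, Complex.add_re] at this
  have hcases : (∀ x, P1 *ᵥ x = 0) ∨ (∀ x, (P2 + P2ᴴ) *ᵥ x = 0) := by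
    by_contra hc
    push_neg at hc
    obtain ⟨⟨a, ha⟩, ⟨b, hb⟩⟩ := hc
    have ha2 : (P2 + P2ᴴ) *ᵥ a = 0 := (hnull a).resolve_left ha
    have hb1 : P1 *ᵥ b = 0 := (hnull b).resolve_right hb
    rcases hnull (a + b) with h | h
    · rw [Matrix.mulVec_add, hb1, add_zero] at h; exact ha h
    · rw [Matrix.mulVec_add, ha2, zero_add] at h; exact hb h
  have hPD : IsPD Q1 ∨ IsPD Q2 := by
    rcases hcases with hc | hc
    · right
      intro x hx
      rw [hQ2def, conj_dot hSinvH]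
      set y := S⁻¹ *ᵥ x with hydef
      have hy : y ≠ 0 := hSinj x hx
      have h10 : (star y ⬝ᵥ P1 *ᵥ y) = 0 := by rw [hc y, dotProduct_zero]
      have := hApd' y hy
      rw [h10] at this
      simpa using this
    · left
      intro x hx
      rw [hQ1def, conj_dot hSinvH]
      set y := S⁻¹ *ᵥ x with hydef
      have hy : y ≠ 0 := hSinj x hx
      have h20 : (star y ⬝ᵥ P2 *ᵥ y).re = 0 := by
        have hsum : star y ⬝ᵥ (P2 + P2ᴴ) *ᵥ y = 0 := by
          rw [hc y, dotProduct_zero]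
        rw [Matrix.add_mulVec, dotProduct_add] at hsum
        rw [dot_conjTranspose] at hsum
        have := congrArg Complex.re hsum
        simp only [Complex.add_re, Complex.zero_re] at this
        have hstar : (star (star y ⬝ᵥ P2 *ᵥ y)).re = (star y ⬝ᵥ P2 *ᵥ y).re := by
          simp [Complex.star_def]
        linarith [this, hstar]
      have := hApd' y hy
      rw [h20] at this
      simpa using this
  have hd1 : IsUnit (Sg + P1).det := by
    refine isPD_isUnit_det fun x hx => ?_
    rw [Matrix.add_mulVec, dotProduct_add, Complex.add_re]
    have := hSgPD x hx
    have := h1 x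
    linarith
  have hd2 : IsUnit (Sg + P2).det := by
    refine isPD_isUnit_det fun x hx => ?_
    rw [Matrix.add_mulVec, dotProduct_add, Complex.add_re]
    have := hSgPD x hx
    have := h2 x
    linarith
  have hdQ1 : IsUnit (1 + Q1).det := isPD_isUnit_det (isPD_one_add hQ1psd)
  have hdQ2 : IsUnit (1 + Q2).det := isPD_isUnit_det (isPD_one_add hQ2psd)
  have hc1 : ∀ z : Matrix (Fin n) (Fin n) ℂ, S⁻¹ * (S * z) = z := fun z => by
    rw [← mul_assoc, hS1', one_mul]
  have hc2 : ∀ z : Matrix (Fin n) (Fin n) ℂ, S * (S⁻¹ * z) = z := fun z => by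
    rw [← mul_assoc, hS1, one_mul]
  have hmid : ∀ P : Matrix (Fin n) (Fin n) ℂ, S * (S⁻¹ * P * S⁻¹) * S = P := by
    intro P
    calc S * (S⁻¹ * P * S⁻¹) * S = S * (S⁻¹ * (P * (S⁻¹ * S))) := by
          simp only [mul_assoc]
    _ = P := by rw [hS1', mul_one, hc2]
  have hfacA1 : Sg + P1 = S * (1 + Q1) * S := by
    rw [mul_add, mul_one, add_mul, hSS, hmid]
  have hfacA2 : Sg + P2 = S * (1 + Q2) * S := by
    rw [mul_add, mul_one, add_mul, hSS, hmid]
  have hfacB1 : Sg - P1 = S * (1 - Q1) * S := by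
    rw [mul_sub, mul_one, sub_mul, hSS, hmid]
  have hfacB2 : Sg - P2 = S * (1 - Q2) * S := by
    rw [mul_sub, mul_one, sub_mul, hSS, hmid]
  have hinvA1 : (Sg + P1)⁻¹ = S⁻¹ * ((1 + Q1)⁻¹ * S⁻¹) := by
    rw [hfacA1, Matrix.mul_inv_rev, Matrix.mul_inv_rev]
  have hinvA2 : (Sg + P2)⁻¹ = S⁻¹ * ((1 + Q2)⁻¹ * S⁻¹) := by
    rw [hfacA2, Matrix.mul_inv_rev, Matrix.mul_inv_rev]
  set C2 := (1 - Q2) * (1 + Q2)⁻¹ with hC2def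
  set C1 := (1 - Q1) * (1 + Q1)⁻¹ with hC1def
  set u := (1 + Q1)⁻¹ * ((1 - Q2) * ((1 + Q2)⁻¹ * (1 - Q1))) with hudef
  have hTfac : (Sg + P1)⁻¹ * (Sg - P2) * (Sg + P2)⁻¹ * (Sg - P1) = S⁻¹ * u * S := by
    rw [hinvA1, hinvA2, hfacB1, hfacB2, hudef]
    simp only [mul_assoc]
    simp only [hc1, hc2]
  have hufac : u = (1 + Q1)⁻¹ * (C2 * C1) * (1 + Q1) := by
    have hq : (1 + Q1)⁻¹ * (1 + Q1) = 1 := Matrix.nonsing_inv_mul _ hdQ1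
    rw [hudef, hC2def, hC1def]
    simp only [mul_assoc, hq, mul_one]
  have hspec : spectrum ℂ ((Sg + P1)⁻¹ * (Sg - P2) * (Sg + P2)⁻¹ * (Sg - P1))
      = spectrum ℂ (C2 * C1) := by
    rw [hTfac, spec_conj _ _ hSdet, hufac, spec_conj _ _ hdQ1]
  have hspec2 : spectrum ℂ (C2 * C1)
      = spectrum ℂ (Matrix.toEuclideanCLM (n := Fin n) (𝕜 := ℂ) (C2 * C1)) :=
    (AlgEquiv.spectrum_eq (Matrix.toEuclideanCLM (n := Fin n) (𝕜 := ℂ)) (C2 * C1)).symm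
  have hnorm : ‖Matrix.toEuclideanCLM (n := Fin n) (𝕜 := ℂ) (C2 * C1)‖ < 1 := by
    rw [_root_.map_mul]
    have hb2 : ‖Matrix.toEuclideanCLM (n := Fin n) (𝕜 := ℂ) C2‖ ≤ 1 := cayley_norm_le hQ2psd
    have hb1 : ‖Matrix.toEuclideanCLM (n := Fin n) (𝕜 := ℂ) C1‖ ≤ 1 := cayley_norm_le hQ1psd
    have hmul := norm_mul_le (Matrix.toEuclideanCLM (n := Fin n) (𝕜 := ℂ) C2)
      (Matrix.toEuclideanCLM (n := Fin n) (𝕜 := ℂ) C1)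
    have hn2 := norm_nonneg (Matrix.toEuclideanCLM (n := Fin n) (𝕜 := ℂ) C2)
    have hn1 := norm_nonneg (Matrix.toEuclideanCLM (n := Fin n) (𝕜 := ℂ) C1)
    rcases hPD with hpd | hpd
    · have hs1 : ‖Matrix.toEuclideanCLM (n := Fin n) (𝕜 := ℂ) C1‖ < 1 := cayley_norm_lt hpd
      nlinarith
    · have hs2 : ‖Matrix.toEuclideanCLM (n := Fin n) (𝕜 := ℂ) C2‖ < 1 := cayley_norm_lt hpd
      nlinarith
  calc spectralRadius ℂ ((Sg + P1)⁻¹ * (Sg - P2) * (Sg + P2)⁻¹ * (Sg - P1))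
      = spectralRadius ℂ (Matrix.toEuclideanCLM (n := Fin n) (𝕜 := ℂ) (C2 * C1)) := by
        rw [spectralRadius, spectralRadius, hspec, hspec2]
  _ ≤ ‖Matrix.toEuclideanCLM (n := Fin n) (𝕜 := ℂ) (C2 * C1)‖₊ :=
      spectrum.spectralRadius_le_nnnorm _
  _ < 1 := by
      rw [ENNReal.coe_lt_one_iff]
      exact_mod_cast hnorm
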